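/- arXiv:1608.04973 — 2 statements merged into one kernel-verified Lean document; each statement's English description precedes it below -/
import Mathlib

section
/- Let G=(V,E) be a finite simple graph, K a field, and let G' be a graph obtained from G by contracting an edge of G. Then the cut algebra K[G'] ≅ S_{G'}/I_{G'} is an algebra retract of the cut algebra K[G] ≅ S_G/I_G. -/
/-!
Let `c : V → V ∖ {u}` send `u` to `v` and fix every other vertex. Pulling partitions back along
`c` gives the substitution `ι : q_B ↦ q_{c⁻¹ B}`, restricting them to `V ∖ {u}` gives
`π : q_A ↦ q_{A ∖ {u}}` (or `0` if `A` separates `u` from `v`), and `π ∘ ι` fixes every variable.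
Both maps carry cut ideals into cut ideals because they lift to the edge rings:
`u_{c⁻¹ B}` is `u_B` with each edge variable of the contraction replaced by the product of the
variables of the edges of `G` above it (times `t_{uv}`, once), and `u_A` becomes `u_{A ∖ {u}}`
or `0` when the variables of all but one edge above each contracted edge are set to `1` and
`s_{uv}` to `0`. If the contraction has no edges its cut algebra is `K`, a retract of any
cut algebra through the augmentation `q ↦ 1`.
-/

open scoped Classical

noncomputable section

namespace CutPaper

open MvPolynomial

/-- An edge `e` is cut by the partition `A | Aᶜ` if it has exactly one endpoint in `A`. -/
def IsCutEdge {V : Type} (A : Set V) (e : Sym2 V) : Prop :=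
  ∃ u v : V, e = s(u, v) ∧ u ∈ A ∧ v ∉ A

/-- The cut set of `A`: all edges of `G` with exactly one endpoint in `A`. -/
def cutSet {V : Type} (G : SimpleGraph V) (A : Set V) : Set (Sym2 V) :=
  {e ∈ G.edgeSet | IsCutEdge A e}

lemma isCutEdge_compl {V : Type} (A : Set V) (e : Sym2 V) :
    IsCutEdge Aᶜ e ↔ IsCutEdge A e := by
  constructor <;> rintro ⟨u, v, rfl, hu, hv⟩
  · exact ⟨v, u, Sym2.eq_swap, Set.notMem_compl_iff.mp hv, hu⟩
  · exact ⟨v, u, Sym2.eq_swap, hv, not_not_intro hu⟩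

/-- Two subsets determine the same unordered partition `A | Aᶜ` of `V`
iff they are equal or complementary. -/
def partitionSetoid (V : Type) : Setoid (Set V) where
  r A B := B = A ∨ B = Aᶜ
  iseqv := by
    refine ⟨fun A => Or.inl rfl, @fun A B h => ?_, @fun A B C h1 h2 => ?_⟩
    · rcases h with rfl | rfl
      · exact Or.inl rfl
      · exact Or.inr (compl_compl A).symm
    · rcases h1 with rfl | rfl <;> rcases h2 with rfl | rfl
      · exact Or.inl rfl
      · exact Or.inr rfl
      · exact Or.inr rfl
      · exact Or.inl (compl_compl A)

/-- The unordered partitions `A | Aᶜ` of `V`, indexing the variables of `S_G`. -/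
abbrev Partition (V : Type) := Quotient (partitionSetoid V)

variable (K : Type) [CommRing K]

/-- The variable `q_{A|Aᶜ}` of the polynomial ring `S_G`. -/
def qPart {V : Type} (A : Set V) : MvPolynomial (Partition V) K :=
  X (Quotient.mk (partitionSetoid V) A)

/-- The monomial `u_A = ∏_{e ∈ Cut(A)} s_e · ∏_{e ∈ E \ Cut(A)} t_e`;
the variable `s_e` is `X (true, e)` and `t_e` is `X (false, e)`. -/
def cutMonomial {V : Type} [Finite V] (G : SimpleGraph V) (A : Set V) :
    MvPolynomial (Bool × Sym2 V) K :=
  ∏ e ∈ (Set.toFinite G.edgeSet).toFinset,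
    if IsCutEdge A e then X (true, e) else X (false, e)

lemma cutMonomial_compl {V : Type} [Finite V] (G : SimpleGraph V) (A : Set V) :
    cutMonomial K G Aᶜ = cutMonomial K G A := by
  unfold cutMonomial
  refine Finset.prod_congr rfl fun e _ => ?_
  by_cases h : IsCutEdge A e
  · rw [if_pos ((isCutEdge_compl A e).mpr h), if_pos h]
  · rw [if_neg fun hc => h ((isCutEdge_compl A e).mp hc), if_neg h]

/-- The `K`-algebra homomorphism `φ_G : S_G → R_G`, `q_{A|Aᶜ} ↦ u_A`. -/
def phi {V : Type} [Finite V] (G : SimpleGraph V) :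
    MvPolynomial (Partition V) K →ₐ[K] MvPolynomial (Bool × Sym2 V) K :=
  aeval fun p : Partition V =>
    Quotient.lift (cutMonomial K G)
      (fun A B hAB => by
        have h : B = A ∨ B = Aᶜ := hAB
        rcases h with rfl | rfl
        · rfl
        · exact (cutMonomial_compl K G A).symm) p

/-- The cut ideal `I_G = ker φ_G`. -/
def cutIdeal {V : Type} [Finite V] (G : SimpleGraph V) :
    Ideal (MvPolynomial (Partition V) K) :=
  RingHom.ker (phi K G)

/-- The cut algebra `K[G]`, i.e. the image of `φ_G`: the `K`-subalgebra of `R_G`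
generated by the monomials `u_A`. -/
def cutAlgebra {V : Type} [Finite V] (G : SimpleGraph V) :
    Subalgebra K (MvPolynomial (Bool × Sym2 V) K) :=
  Algebra.adjoin K {m | ∃ A : Set V, m = cutMonomial K G A}

/-- The generator `u_A` of the cut algebra, as an element of the cut algebra. -/
def uGen {V : Type} [Finite V] (G : SimpleGraph V) (A : Set V) : ↥(cutAlgebra K G) :=
  ⟨cutMonomial K G A, Algebra.subset_adjoin ⟨A, rfl⟩⟩

/-- An element of `S_G/I` is homogeneous of degree `d` if it is the class of a homogeneous
polynomial of degree `d`. -/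
def QuotHomogeneous {σ : Type} (I : Ideal (MvPolynomial σ K)) (d : ℕ)
    (x : MvPolynomial σ K ⧸ I) : Prop :=
  ∃ f : MvPolynomial σ K, f.IsHomogeneous d ∧ Ideal.Quotient.mk I f = x

/-- The cut algebra of `H` is an algebra retract of the cut algebra of `G`:
there are homogeneous `K`-algebra homomorphisms `ι : K[H] → K[G]` (injective) and
`π : K[G] → K[H]` with `π ∘ ι = id`. -/
def CutAlgebraRetract {V W : Type} [Finite V] [Finite W]
    (H : SimpleGraph W) (G : SimpleGraph V) : Prop :=
  ∃ (ι : (MvPolynomial (Partition W) K ⧸ cutIdeal K H) →ₐ[K]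
      (MvPolynomial (Partition V) K ⧸ cutIdeal K G))
    (π : (MvPolynomial (Partition V) K ⧸ cutIdeal K G) →ₐ[K]
      (MvPolynomial (Partition W) K ⧸ cutIdeal K H)),
    Function.Injective ι ∧
    (∀ d x, QuotHomogeneous K (cutIdeal K H) d x →
      ∃ d', QuotHomogeneous K (cutIdeal K G) d' (ι x)) ∧
    (∀ d x, QuotHomogeneous K (cutIdeal K G) d x →
      ∃ d', QuotHomogeneous K (cutIdeal K H) d' (π x)) ∧
    π.comp ι = AlgHom.id K _

/-- The graph obtained from `G` by contracting the edge `{u, v}`: the vertex `u` is removed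
and merged into `v`. -/
def contractEdge {V : Type} (G : SimpleGraph V) (u v : V) :
    SimpleGraph {x : V // x ≠ u} where
  Adj a b := a ≠ b ∧
    (G.Adj a b ∨ ((a : V) = v ∧ G.Adj u b) ∨ ((b : V) = v ∧ G.Adj a u))
  symm := ⟨by
    rintro a b ⟨hne, h | ⟨ha, h⟩ | ⟨hb, h⟩⟩
    · exact ⟨hne.symm, Or.inl h.symm⟩
    · exact ⟨hne.symm, Or.inr (Or.inr ⟨ha, h.symm⟩)⟩
    · exact ⟨hne.symm, Or.inr (Or.inl ⟨hb, h.symm⟩)⟩⟩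
  loopless := ⟨fun a h => h.1 rfl⟩

/-- The induced subgraph `G_W` is a neighborhood-minor of `G`: `W` and `W' = Wᶜ` are nonempty
and there is a vertex `v ∈ W` with `W ∩ N_G(W') ⊆ N_{G_W}[v]`. -/
def IsNeighborhoodMinor {V : Type} (G : SimpleGraph V) (W : Set V) : Prop :=
  W.Nonempty ∧ Wᶜ.Nonempty ∧
    ∃ v ∈ W, ∀ x ∈ W, (∃ y ∈ Wᶜ, G.Adj y x) → x = v ∨ G.Adj v x

/-- The cut vector `δ_A ∈ {0,1}^E` of the partition `A | Aᶜ`. -/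
def cutVector {V : Type} (G : SimpleGraph V) (A : Set V) : ↥G.edgeSet → ℝ :=
  fun e => if IsCutEdge A (e : Sym2 V) then 1 else 0

/-- The cut polytope `Cut^□(G) ⊆ ℝ^E`: the convex hull of the cut vectors. -/
def cutPolytope {V : Type} (G : SimpleGraph V) : Set (↥G.edgeSet → ℝ) :=
  convexHull ℝ {x | ∃ A : Set V, x = cutVector G A}

/-- `F` is a face of `P`: either a trivial face (`P` or `∅`), or the intersection of `P`
with a supporting hyperplane. -/
def IsFace {α : Type} (P F : Set (α → ℝ)) : Prop :=
  F = P ∨ F = ∅ ∨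
    ∃ (φ : (α → ℝ) →ₗ[ℝ] ℝ) (c : ℝ), φ ≠ 0 ∧
      (∀ x ∈ P, φ x ≤ c) ∧ F = P ∩ {x | φ x = c}

/-- `P` and `Q` are affinely isomorphic: there is a bijective map from `P` onto `Q`
extending to an affine map. -/
def AffinelyIsomorphic {α β : Type} (P : Set (α → ℝ)) (Q : Set (β → ℝ)) : Prop :=
  ∃ f : (α → ℝ) →ᵃ[ℝ] (β → ℝ), Set.InjOn f P ∧ f '' P = Q

/-- The monomial `z · ∏_{e ∈ Cut(A)} y_e` of the polytopal algebra of the cut polytope;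
the variable `z` is `X none` and `y_e` is `X (some e)`. -/
def polytopeMonomial {V : Type} [Finite V] (G : SimpleGraph V) (A : Set V) :
    MvPolynomial (Option (Sym2 V)) K :=
  X none * ∏ e ∈ (Set.toFinite (cutSet G A)).toFinset, X (some e)

/-- The polytopal algebra `K[Cut^□(G)]`: the subalgebra of `K[y_e (e ∈ E), z]` generated by
the monomials `z · y^{δ_A}` attached to the lattice points (= cut vectors) of `Cut^□(G)`. -/
def polytopalAlgebra {V : Type} [Finite V] (G : SimpleGraph V) :
    Subalgebra K (MvPolynomial (Option (Sym2 V)) K) :=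
  Algebra.adjoin K {m | ∃ A : Set V, m = polytopeMonomial K G A}

/-- `G'` is a combinatorial retract of `G`: it is obtained from `G` by a finite sequence of
edge contractions and neighborhood-minors. -/
inductive CombinatorialRetract : ∀ {V W : Type}, SimpleGraph V → SimpleGraph W → Prop
  | refl {V : Type} (G : SimpleGraph V) : CombinatorialRetract G G
  | contract {V W : Type} (G : SimpleGraph V) (u v : V) (huv : G.Adj u v)
      (G' : SimpleGraph W) (h : CombinatorialRetract (contractEdge G u v) G') :
      CombinatorialRetract G G'
  | nbhdMinor {V W : Type} (G : SimpleGraph V) (S : Set V)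
      (hS : IsNeighborhoodMinor G S) (G' : SimpleGraph W)
      (h : CombinatorialRetract (SimpleGraph.induce S G) G') :
      CombinatorialRetract G G'


lemma phi_X_mk {V : Type} [Finite V] (G : SimpleGraph V) (A : Set V) :
    phi K G (X ⟦A⟧) = cutMonomial K G A := by
  simp only [phi, aeval_X, Quotient.lift_mk]

lemma cutMonomial_eq_prod {V : Type} [Finite V] (G : SimpleGraph V) (A : Set V) :
    cutMonomial K G A
      = ∏ e ∈ (Set.toFinite G.edgeSet).toFinset, X (decide (IsCutEdge A e), e) := by
  refine Finset.prod_congr rfl fun e _ => ?_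
  split_ifs with h <;> simp [h]

lemma isCutEdge_pair {V : Type} {A : Set V} {a b : V} :
    IsCutEdge A s(a, b) ↔ (a ∈ A ∧ b ∉ A) ∨ (b ∈ A ∧ a ∉ A) := by
  constructor
  · rintro ⟨x, y, hxy, hx, hy⟩
    rcases Sym2.eq_iff.mp hxy with ⟨rfl, rfl⟩ | ⟨rfl, rfl⟩
    exacts [Or.inl ⟨hx, hy⟩, Or.inr ⟨hx, hy⟩]
  · rintro (⟨ha, hb⟩ | ⟨hb, ha⟩)
    exacts [⟨a, b, rfl, ha, hb⟩, ⟨b, a, Sym2.eq_swap, hb, ha⟩]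

lemma isCutEdge_map {V W : Type} (g : V → W) (B : Set W) (e : Sym2 V) :
    IsCutEdge B (e.map g) ↔ IsCutEdge (g ⁻¹' B) e := by
  induction e using Sym2.ind with
  | _ a b => simp only [Sym2.map_mk, isCutEdge_pair, Set.mem_preimage]

def Partition.comap {V W : Type} (g : V → W) : Partition W → Partition V :=
  Quotient.map (g ⁻¹' ·) <| by
    rintro A _ (rfl | rfl)
    exacts [Or.inl rfl, Or.inr Set.preimage_compl]

lemma Partition.comap_mk {V W : Type} (g : V → W) (B : Set W) :
    Partition.comap g ⟦B⟧ = ⟦g ⁻¹' B⟧ := rfl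

section Retract

variable {σ τ : Type}

lemma isHomogeneous_algHom_apply {m d : ℕ} (g : MvPolynomial σ K →ₐ[K] MvPolynomial τ K)
    (hg : ∀ i, (g (X i)).IsHomogeneous m) {f : MvPolynomial σ K} (hf : f.IsHomogeneous d) :
    (g f).IsHomogeneous (m * d) := by
  rw [show g = aeval fun i => g (X i) from algHom_ext fun i => by rw [aeval_X]]
  exact hf.aeval _ hg

lemma QuotHomogeneous.quotientMapₐ {I : Ideal (MvPolynomial σ K)}
    {J : Ideal (MvPolynomial τ K)} (g : MvPolynomial σ K →ₐ[K] MvPolynomial τ K)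
    (hIJ : I ≤ J.comap g) {m d : ℕ} (hg : ∀ i, (g (X i)).IsHomogeneous m)
    {x : MvPolynomial σ K ⧸ I} (hx : QuotHomogeneous K I d x) :
    QuotHomogeneous K J (m * d) (Ideal.quotientMapₐ J g hIJ x) := by
  obtain ⟨f, hf, rfl⟩ := hx
  exact ⟨g f, isHomogeneous_algHom_apply K g hg hf, rfl⟩

variable {V W : Type} [Finite V] [Finite W] {G : SimpleGraph V} {H : SimpleGraph W}

lemma cutIdeal_le_comap {g : MvPolynomial (Partition W) K →ₐ[K] MvPolynomial (Partition V) K}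
    {ψ : MvPolynomial (Bool × Sym2 W) K →ₐ[K] MvPolynomial (Bool × Sym2 V) K}
    (h : (phi K G).comp g = ψ.comp (phi K H)) :
    cutIdeal K H ≤ (cutIdeal K G).comap g := by
  intro f hf
  rw [cutIdeal, RingHom.mem_ker] at hf
  rw [Ideal.mem_comap, cutIdeal, RingHom.mem_ker]
  change ((phi K G).comp g) f = 0
  rw [h, AlgHom.comp_apply, hf, map_zero]

theorem cutAlgebraRetract_of_algHom {m n : ℕ}
    (ι : MvPolynomial (Partition W) K →ₐ[K] MvPolynomial (Partition V) K)
    (π : MvPolynomial (Partition V) K →ₐ[K] MvPolynomial (Partition W) K)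
    (ψι : MvPolynomial (Bool × Sym2 W) K →ₐ[K] MvPolynomial (Bool × Sym2 V) K)
    (ψπ : MvPolynomial (Bool × Sym2 V) K →ₐ[K] MvPolynomial (Bool × Sym2 W) K)
    (hψι : (phi K G).comp ι = ψι.comp (phi K H)) (hψπ : (phi K H).comp π = ψπ.comp (phi K G))
    (hπι : ∀ p, phi K H (π (ι (X p))) = phi K H (X p))
    (hι : ∀ p, (ι (X p)).IsHomogeneous m) (hπ : ∀ p, (π (X p)).IsHomogeneous n) :
    CutAlgebraRetract K H G := by
  let ιQ := Ideal.quotientMapₐ (cutIdeal K G) ι (cutIdeal_le_comap K hψι)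
  let πQ := Ideal.quotientMapₐ (cutIdeal K H) π (cutIdeal_le_comap K hψπ)
  have hπιQ : πQ.comp ιQ = AlgHom.id K _ := by
    refine Ideal.Quotient.algHom_ext K (algHom_ext fun p => ?_)
    simp only [ιQ, πQ, AlgHom.comp_apply, Ideal.Quotient.mkₐ_eq_mk, Ideal.quotient_map_mkₐ,
      AlgHom.id_apply]
    rw [Ideal.Quotient.eq, cutIdeal, RingHom.mem_ker, map_sub, hπι, sub_self]
  refine ⟨ιQ, πQ, Function.LeftInverse.injective (g := πQ) (AlgHom.congr_fun hπιQ),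
    fun _ _ hx => ⟨_, hx.quotientMapₐ K ι _ hι⟩, fun _ _ hx => ⟨_, hx.quotientMapₐ K π _ hπ⟩,
    hπιQ⟩

lemma aeval_one_cutMonomial {R : Type} [CommRing R] [Algebra K R] (G : SimpleGraph V)
    (A : Set V) : aeval (fun _ => (1 : R)) (cutMonomial K G A) = 1 := by
  simp [cutMonomial, apply_ite]

theorem cutAlgebraRetract_of_edgeSet_eq_empty (hH : H.edgeSet = ∅) :
    CutAlgebraRetract K H G := by
  have hφH : ∀ p, phi K H (X p) = 1 := Quotient.ind fun B => by
    rw [phi_X_mk, cutMonomial]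
    simp [hH]
  refine cutAlgebraRetract_of_algHom K (m := 0) (n := 0) (aeval fun _ => 1) (aeval fun _ => 1)
    (aeval fun _ => 1) (aeval fun _ => 1) ?_ ?_ (by simp [hφH])
    (fun _ => by simp [isHomogeneous_one]) (fun _ => by simp [isHomogeneous_one])
  · refine algHom_ext fun p => ?_
    simp [hφH]
  · refine algHom_ext fun p => ?_
    induction p using Quotient.ind with | _ A => ?_
    rw [AlgHom.comp_apply, AlgHom.comp_apply, aeval_X, map_one, phi_X_mk,
      aeval_one_cutMonomial]

end Retract

section Contraction

variable {V : Type} {u v : V}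

def collapse (hvu : v ≠ u) (x : V) : {x : V // x ≠ u} :=
  if h : x = u then ⟨v, hvu⟩ else ⟨x, h⟩

lemma coe_collapse (hvu : v ≠ u) (x : V) : (collapse hvu x : V) = if x = u then v else x := by
  unfold collapse; split_ifs <;> rfl

lemma collapse_self (hvu : v ≠ u) : collapse hvu u = ⟨v, hvu⟩ := dif_pos rfl

lemma collapse_coe (hvu : v ≠ u) (x : {x : V // x ≠ u}) : collapse hvu x = x := dif_neg x.2

lemma collapse_eq_collapse_iff (hvu : v ≠ u) {a b : V} :
    collapse hvu a = collapse hvu b ↔ a = b ∨ s(a, b) = s(u, v) := by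
  rw [Subtype.ext_iff, coe_collapse, coe_collapse, Sym2.eq_iff]
  split_ifs <;> subst_vars <;> tauto

variable {G : SimpleGraph V}

lemma contractEdge_adj_iff (hvu : v ≠ u) {a' b' : {x : V // x ≠ u}} :
    (contractEdge G u v).Adj a' b' ↔
      a' ≠ b' ∧ ∃ a b, G.Adj a b ∧ collapse hvu a = a' ∧ collapse hvu b = b' := by
  refine and_congr_right fun _ => ⟨?_, ?_⟩
  · rintro (h | ⟨ha, h⟩ | ⟨hb, h⟩)
    · exact ⟨a', b', h, collapse_coe hvu a', collapse_coe hvu b'⟩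
    · exact ⟨u, b', h, by rw [collapse_self]; exact Subtype.ext ha.symm, collapse_coe hvu b'⟩
    · exact ⟨a', u, h, collapse_coe hvu a', by rw [collapse_self]; exact Subtype.ext hb.symm⟩
  · rintro ⟨a, b, hab, rfl, rfl⟩
    simp only [coe_collapse]
    split_ifs with ha hb hb <;> subst_vars
    · exact absurd hab G.irrefl
    · exact Or.inr (Or.inl ⟨rfl, hab⟩)
    · exact Or.inr (Or.inr ⟨rfl, hab⟩)
    · exact Or.inl hab

lemma map_collapse_mem_edgeSet (hvu : v ≠ u) {e : Sym2 V} (he : e ∈ G.edgeSet)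
    (hne : e ≠ s(u, v)) : e.map (collapse hvu) ∈ (contractEdge G u v).edgeSet := by
  induction e using Sym2.ind with | _ a b => ?_
  refine (contractEdge_adj_iff hvu).mpr ⟨fun h => ?_, a, b, he, rfl, rfl⟩
  rcases (collapse_eq_collapse_iff hvu).mp h with rfl | h
  exacts [G.irrefl he, hne h]

lemma exists_map_collapse_eq (hvu : v ≠ u) {e' : Sym2 {x : V // x ≠ u}}
    (he' : e' ∈ (contractEdge G u v).edgeSet) :
    ∃ e ∈ G.edgeSet, e ≠ s(u, v) ∧ e.map (collapse hvu) = e' := by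
  induction e' using Sym2.ind with | _ a' b' => ?_
  obtain ⟨hne, a, b, hab, rfl, rfl⟩ := (contractEdge_adj_iff hvu).mp he'
  exact ⟨s(a, b), hab, fun h => hne ((collapse_eq_collapse_iff hvu).mpr (Or.inr h)), rfl⟩

lemma collapse_self_eq_collapse (hvu : v ≠ u) : collapse hvu u = collapse hvu v :=
  (collapse_eq_collapse_iff hvu).mpr (Or.inr rfl)

lemma preimage_collapse_preimage_coe (hvu : v ≠ u) {A : Set V} (hA : u ∈ A ↔ v ∈ A) :
    collapse hvu ⁻¹' (Subtype.val ⁻¹' A) = A := by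
  ext x
  simp only [Set.mem_preimage, coe_collapse]
  split_ifs with h
  · exact h ▸ hA.symm
  · exact Iff.rfl

lemma preimage_coe_preimage_collapse (hvu : v ≠ u) (B : Set {x : V // x ≠ u}) :
    Subtype.val ⁻¹' (collapse hvu ⁻¹' B) = B := by
  ext x
  simp only [Set.mem_preimage, collapse_coe]

lemma not_isCutEdge_preimage_collapse {V : Type} {u v : V} (hvu : v ≠ u)
    (B : Set {x : V // x ≠ u}) : ¬ IsCutEdge (collapse hvu ⁻¹' B) s(u, v) := by
  simp [isCutEdge_pair, collapse_self_eq_collapse hvu]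

end Contraction

def restrictVar {V : Type} (u v : V) : Partition V → MvPolynomial (Partition {x : V // x ≠ u}) K :=
  Quotient.lift (fun A => if (u ∈ A ↔ v ∈ A) then X ⟦Subtype.val ⁻¹' A⟧ else 0) <| by
    rintro A _ (rfl | rfl)
    · rfl
    · have hsep : (u ∈ Aᶜ ↔ v ∈ Aᶜ) ↔ (u ∈ A ↔ v ∈ A) := by
        simp only [Set.mem_compl_iff, not_iff_not]
      simp only [hsep, Set.preimage_compl]
      split_ifs
      exacts [congrArg X (Quotient.sound (Or.inr rfl)), rfl]

lemma restrictVar_mk {V : Type} (u v : V) (A : Set V) :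
    restrictVar K u v ⟦A⟧ = if u ∈ A ↔ v ∈ A then X ⟦Subtype.val ⁻¹' A⟧ else 0 := rfl

section CutMonomials

variable {V : Type} [Finite V] {G : SimpleGraph V} {u v : V}

theorem exists_algHom_cutMonomial_eq_cutMonomial_preimage (huv : G.Adj u v)
    (hE : (contractEdge G u v).edgeSet.Nonempty) :
    ∃ ψ : MvPolynomial (Bool × Sym2 {x : V // x ≠ u}) K →ₐ[K] MvPolynomial (Bool × Sym2 V) K,
      ∀ B, ψ (cutMonomial K (contractEdge G u v) B)
        = cutMonomial K G (collapse huv.ne' ⁻¹' B) := by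
  obtain ⟨e₀, he₀⟩ := hE
  set E := (Set.toFinite G.edgeSet).toFinset
  set E' := (Set.toFinite (contractEdge G u v).edgeSet).toFinset
  have huvE : s(u, v) ∈ E := (Set.Finite.mem_toFinset _).mpr huv
  have hmaps : ∀ e ∈ E.erase s(u, v), e.map (collapse huv.ne') ∈ E' := fun e he => by
    obtain ⟨hne, he⟩ := Finset.mem_erase.mp he
    exact (Set.Finite.mem_toFinset _).mpr
      (map_collapse_mem_edgeSet huv.ne' ((Set.Finite.mem_toFinset _).mp he) hne)
  -- `t_{uv}` divides every `u_{collapse⁻¹ B}`, as `uv` is never cut by a pulled-back partition;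
  -- it is supplied through an arbitrary edge `e₀` of the contraction
  refine ⟨aeval fun (b, e') =>
    (if e' = e₀ then X (false, s(u, v)) else 1) *
      ∏ e ∈ E.erase s(u, v) with e.map (collapse huv.ne') = e', X (b, e), fun B => ?_⟩
  rw [cutMonomial_eq_prod, map_prod, cutMonomial_eq_prod, ← Finset.mul_prod_erase _ _ huvE,
    decide_eq_false (not_isCutEdge_preimage_collapse huv.ne' B)]
  simp only [aeval_X, Finset.prod_mul_distrib, Finset.prod_ite_eq',
    if_pos ((Set.Finite.mem_toFinset _).mpr he₀)]
  congr 1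
  rw [← Finset.prod_fiberwise_of_maps_to hmaps]
  refine Finset.prod_congr rfl fun e' _ => Finset.prod_congr rfl fun e he => ?_
  rw [← (Finset.mem_filter.mp he).2, isCutEdge_map]

theorem exists_algHom_cutMonomial_eq_cutMonomial_restrict (huv : G.Adj u v) :
    ∃ ψ : MvPolynomial (Bool × Sym2 V) K →ₐ[K] MvPolynomial (Bool × Sym2 {x : V // x ≠ u}) K,
      ∀ A, ψ (cutMonomial K G A) = if u ∈ A ↔ v ∈ A
        then cutMonomial K (contractEdge G u v) (Subtype.val ⁻¹' A) else 0 := by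
  set E := (Set.toFinite G.edgeSet).toFinset
  set E' := (Set.toFinite (contractEdge G u v).edgeSet).toFinset
  have huvE : s(u, v) ∈ E := (Set.Finite.mem_toFinset _).mpr huv
  have : Nonempty (Sym2 V) := ⟨s(u, v)⟩
  choose! sec hsec_mem hsec_ne hsec using fun e' (he' : e' ∈ E') =>
    exists_map_collapse_eq huv.ne' ((Set.Finite.mem_toFinset _).mp he')
  -- `s_{uv} ↦ 0` kills exactly the partitions separating `u` and `v`; above each edge of the
  -- contraction only the edge chosen by `sec` keeps its variable
  refine ⟨aeval fun (b, e) =>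
    if e = s(u, v) then (if b then 0 else 1)
    else if e ∈ E'.image sec then X (b, e.map (collapse huv.ne')) else 1, fun A => ?_⟩
  rw [cutMonomial_eq_prod, map_prod, ← Finset.mul_prod_erase _ _ huvE]
  split_ifs with hA
  · have hcut : ¬ IsCutEdge A s(u, v) := by rw [isCutEdge_pair]; tauto
    have hsub : E'.image sec ⊆ E.erase s(u, v) := by
      simp only [Finset.image_subset_iff, Finset.mem_erase]
      exact fun e' he' => ⟨hsec_ne e' he', (Set.Finite.mem_toFinset _).mpr (hsec_mem e' he')⟩
    have hinj : Set.InjOn sec E' := fun e₁ h₁ e₂ h₂ h => by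
      rw [← hsec e₁ h₁, ← hsec e₂ h₂, h]
    simp only [aeval_X, decide_eq_false hcut, ↓reduceIte, Bool.false_eq_true, one_mul]
    rw [Finset.prod_congr rfl fun e he => if_neg (Finset.ne_of_mem_erase he),
      Finset.prod_ite_mem, Finset.inter_eq_right.mpr hsub, Finset.prod_image hinj,
      cutMonomial_eq_prod]
    refine Finset.prod_congr rfl fun e' he' => ?_
    have hcut' := isCutEdge_map (collapse huv.ne') (Subtype.val ⁻¹' A) (sec e')
    rw [hsec e' he', preimage_collapse_preimage_coe huv.ne' hA] at hcut'
    rw [hsec e' he', hcut']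
  · have hcut : IsCutEdge A s(u, v) := by rw [isCutEdge_pair]; tauto
    simp [hcut]

end CutMonomials

theorem cutAlgebraRetract_contractEdge {V : Type} [Finite V] {G : SimpleGraph V} {u v : V}
    (huv : G.Adj u v) (hE : (contractEdge G u v).edgeSet.Nonempty) :
    CutAlgebraRetract K (contractEdge G u v) G := by
  obtain ⟨ψι, hψι⟩ := exists_algHom_cutMonomial_eq_cutMonomial_preimage K huv hE
  obtain ⟨ψπ, hψπ⟩ := exists_algHom_cutMonomial_eq_cutMonomial_restrict K huv
  refine cutAlgebraRetract_of_algHom K (m := 1) (n := 1)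
    (rename (Partition.comap (collapse huv.ne'))) (aeval (restrictVar K u v)) ψι ψπ
    (algHom_ext fun p => Quotient.inductionOn p fun B => ?_)
    (algHom_ext fun p => Quotient.inductionOn p fun A => ?_)
    (fun p => Quotient.inductionOn p fun B => ?_)
    (fun _ => by rw [rename_X]; exact isHomogeneous_X _ _)
    (fun p => Quotient.inductionOn p fun A => ?_)
  · rw [AlgHom.comp_apply, AlgHom.comp_apply, rename_X, Partition.comap_mk, phi_X_mk, phi_X_mk,
      hψι]
  · rw [AlgHom.comp_apply, AlgHom.comp_apply, aeval_X, restrictVar_mk, phi_X_mk, hψπ]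
    split_ifs
    exacts [phi_X_mk K _ _, map_zero _]
  · rw [rename_X, aeval_X, Partition.comap_mk, restrictVar_mk,
      if_pos (by rw [Set.mem_preimage, Set.mem_preimage, collapse_self_eq_collapse]),
      preimage_coe_preimage_collapse]
  · rw [aeval_X, restrictVar_mk]
    split_ifs
    exacts [isHomogeneous_X _ _, isHomogeneous_zero _ _ _]

theorem stmt3_general {V : Type} [Fintype V] (K : Type) [Field K]
    (G : SimpleGraph V) (u v : V) (huv : G.Adj u v) :
    CutAlgebraRetract K (contractEdge G u v) G := by
  by_cases hE : (contractEdge G u v).edgeSet.Nonempty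
  · exact cutAlgebraRetract_contractEdge K huv hE
  · exact cutAlgebraRetract_of_edgeSet_eq_empty K (Set.not_nonempty_iff_eq_empty.mp hE)

theorem stmt3 {V : Type} [Fintype V] [Nonempty V] (K : Type) [Field K]
    (G : SimpleGraph V) (u v : V) (huv : G.Adj u v) :
    CutAlgebraRetract K (contractEdge G u v) G :=
  stmt3_general K G u v huv

end CutPaper
end
end

section
/- Let G=(V,E) be a finite simple disconnected graph with |E| ≥ 1 and let K be a field. Then the following are equivalent: (a) there exists d ≥ 1 such that the cut ideal I_G is generated by homogeneous elements of degree d; (b) I_G is generated by homogeneous linear forms (degree 1 elements); (c) either the edge set of G consists of a single edge and |V| ≥ 3, or the edge set of G consists of the three edges of a triangle on three of its vertices and |V| ≥ 4 (i.e. G is K_2 ⊔ tK_1 or K_3 ⊔ tK_1 for some t ≥ 1). -/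
open scoped Classical

noncomputable section

namespace CutPaper

open MvPolynomial

variable (K : Type) [CommRing K]

-- WORK SECTION (to be inserted before stmt10)

open MvPolynomial
variable {V : Type} [Fintype V] (K : Type) [Field K]

/-- index of an edge in the variable set, according to whether it is cut -/
def cIdx (A : Set V) (e : Sym2 V) : Bool × Sym2 V :=
  if IsCutEdge A e then (true, e) else (false, e)

/-- exponent vector of the cut monomial -/
def cutW (G : SimpleGraph V) (A : Set V) : (Bool × Sym2 V) →₀ ℕ :=
  ∑ e ∈ (Set.toFinite G.edgeSet).toFinset, Finsupp.single (cIdx A e) 1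

lemma monprod {ι τ : Type} (T : Finset ι) (u : ι → (τ →₀ ℕ)) :
    (∏ i ∈ T, monomial (u i) (1:K)) = monomial (∑ i ∈ T, u i) 1 := by
  classical
  induction T using Finset.induction_on with
  | empty => simp [monomial_eq]
  | insert _ _ hnot ih =>
      rw [Finset.prod_insert hnot, Finset.sum_insert hnot, ih, monomial_mul, one_mul]

lemma cutMonomial_eq_monomial (G : SimpleGraph V) (A : Set V) :
    cutMonomial K G A = monomial (cutW G A) 1 := by
  rw [cutMonomial, cutW, ← monprod]
  refine Finset.prod_congr rfl fun e _ => ?_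
  by_cases h : IsCutEdge A e
  · rw [if_pos h, cIdx, if_pos h]; rfl
  · rw [if_neg h, cIdx, if_neg h]; rfl

lemma cutW_compl (G : SimpleGraph V) (A : Set V) : cutW G Aᶜ = cutW G A := by
  refine Finset.sum_congr rfl fun e _ => ?_
  unfold cIdx
  rw [isCutEdge_compl]

/-- exponent vector, on partitions -/
def mQ (G : SimpleGraph V) : Partition V → ((Bool × Sym2 V) →₀ ℕ) :=
  Quotient.lift (cutW G) (fun A B hAB => by
    rcases (hAB : B = A ∨ B = Aᶜ) with rfl | rfl
    · rfl
    · exact (cutW_compl G A).symm)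

lemma phi_X (G : SimpleGraph V) (p : Partition V) :
    phi K G (X p) = monomial (mQ G p) 1 := by
  induction p using Quotient.ind with
  | _ A => rw [phi, aeval_X]; exact cutMonomial_eq_monomial K G A



/-- any algebra map sending variables to monic monomials sends monomials to monomials -/
lemma algHom_monomial {σ τ : Type} (ψ : MvPolynomial σ K →ₐ[K] MvPolynomial τ K)
    (w : σ → (τ →₀ ℕ)) (hw : ∀ p, ψ (X p) = monomial (w p) 1) (d : σ →₀ ℕ) (c : K) :
    ψ (monomial d c) = monomial (d.sum fun p k => k • w p) c := by
  rw [monomial_eq, map_mul]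
  have hC : ψ (C c) = C c := by
    have := ψ.commutes c
    simpa [algebraMap_eq] using this
  rw [hC, Finsupp.prod, map_prod]
  have : (∏ p ∈ d.support, ψ (X p ^ d p)) = ∏ p ∈ d.support, monomial (d p • w p) (1:K) := by
    refine Finset.prod_congr rfl fun p _ => ?_
    rw [map_pow, hw, monomial_pow, one_pow]
  rw [this, monprod, Finsupp.sum, C_mul_monomial, mul_one]

/-- grouping lemma: a linear relation among monomials pushes to any function of exponents -/
lemma groupsum {ι M A : Type} [AddCommMonoid A] [Module K A]
    (T : Finset ι) (c : ι → K) (w : ι → (M →₀ ℕ)) (g : (M →₀ ℕ) → A)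
    (h : (∑ i ∈ T, monomial (w i) (c i) : MvPolynomial M K) = 0) :
    ∑ i ∈ T, c i • g (w i) = 0 := by
  classical
  have key : ∀ m : M →₀ ℕ, (∑ i ∈ T.filter (fun i => w i = m), c i) = 0 := by
    intro m
    have h2 := congrArg (coeff m) h
    rw [coeff_zero] at h2
    rw [← h2, MvPolynomial.coeff_sum, Finset.sum_filter]
    refine Finset.sum_congr rfl fun i _ => ?_
    rw [coeff_monomial]
  rw [← Finset.sum_fiberwise_of_maps_to (g := w) (t := T.image w)
    (fun i hi => Finset.mem_image_of_mem w hi) (fun i => c i • g (w i))]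
  refine Finset.sum_eq_zero fun m _ => ?_
  have : ∑ i ∈ T.filter (fun i => w i = m), c i • g (w i)
      = ∑ i ∈ T.filter (fun i => w i = m), c i • g m := by
    refine Finset.sum_congr rfl fun i hi => ?_
    rw [(Finset.mem_filter.mp hi).2]
  rw [this, ← Finset.sum_smul, key, zero_smul]

lemma degree_one_eq_single {σ : Type} (d : σ →₀ ℕ) (h : (d.sum fun _ k => k) = 1) :
    ∃ p, d = Finsupp.single p 1 := by
  classical
  have hne : d ≠ 0 := by
    intro h0; rw [h0] at h; simp [Finsupp.sum] at h
  obtain ⟨p, hp⟩ := Finsupp.ne_iff.mp hne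
  rw [Finsupp.coe_zero, Pi.zero_apply] at hp
  have hmem : p ∈ d.support := Finsupp.mem_support_iff.mpr hp
  have hsum : (d.sum fun _ k => k) = ∑ i ∈ d.support, d i := rfl
  have hle : d p ≤ ∑ i ∈ d.support, d i :=
    Finset.single_le_sum (fun _ _ => Nat.zero_le _) hmem
  have hdp : d p = 1 := by omega
  refine ⟨p, ?_⟩
  ext q
  by_cases hq : q = p
  · subst hq; rw [hdp, Finsupp.single_eq_same]
  · rw [Finsupp.single_eq_of_ne' (fun hc => hq hc.symm)]
    by_contra hq0
    have hqmem : q ∈ d.support := Finsupp.mem_support_iff.mpr hq0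
    have hpq : p ∈ d.support.erase q := Finset.mem_erase.mpr ⟨fun hc => hq hc.symm, hmem⟩
    have h1 : d q + ∑ i ∈ d.support.erase q, d i = ∑ i ∈ d.support, d i :=
      Finset.add_sum_erase _ (fun i => d i) hqmem
    have h2 : d p ≤ ∑ i ∈ d.support.erase q, d i :=
      Finset.single_le_sum (fun _ _ => Nat.zero_le _) hpq
    omega

lemma isHomog_degree {σ : Type} (f : MvPolynomial σ K) (n : ℕ) (h : f.IsHomogeneous n)
    (d : σ →₀ ℕ) (hd : coeff d f ≠ 0) : (d.sum fun _ k => k) = n := by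
  have := h hd
  rw [← this]
  simp [Finsupp.weight, Finsupp.sum, Finsupp.linearCombination]

/-- the homomorphism killing all linear elements of the cut ideal -/
def rhoMap (G : SimpleGraph V) :
    MvPolynomial (Partition V) K →ₐ[K] MvPolynomial ((Bool × Sym2 V) →₀ ℕ) K :=
  aeval (fun p => X (mQ G p))

lemma rhoMap_X (G : SimpleGraph V) (p : Partition V) :
    rhoMap K G (X p) = X (mQ G p) := by
  rw [rhoMap, aeval_X]

lemma phi_monomial (G : SimpleGraph V) (d : Partition V →₀ ℕ) (c : K) :
    phi K G (monomial d c) = monomial (d.sum fun p k => k • mQ G p) c :=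
  algHom_monomial K (phi K G) (mQ G) (phi_X K G) d c

lemma linkill (G : SimpleGraph V) (f : MvPolynomial (Partition V) K)
    (hf : f.IsHomogeneous 1) (hker : phi K G f = 0) : rhoMap K G f = 0 := by
  classical
  have hdecomp : f = ∑ d ∈ f.support, monomial d (coeff d f) := (f.support_sum_monomial_coeff).symm
  set L : (Partition V →₀ ℕ) → ((Bool × Sym2 V) →₀ ℕ) :=
    fun d => d.sum fun p k => k • mQ G p with hLdef
  have hphi : (0 : MvPolynomial (Bool × Sym2 V) K) = ∑ d ∈ f.support, monomial (L d) (coeff d f) := by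
    rw [← hker]
    conv_lhs => rw [hdecomp]
    rw [map_sum]
    exact Finset.sum_congr rfl fun d _ => phi_monomial K G d (coeff d f)
  have hgroup := groupsum K f.support (fun d => coeff d f) L
    (fun m => (X m : MvPolynomial ((Bool × Sym2 V) →₀ ℕ) K)) hphi.symm
  have hrho : rhoMap K G f = ∑ d ∈ f.support, (coeff d f) • X (L d) := by
    conv_lhs => rw [hdecomp]
    rw [map_sum]
    refine Finset.sum_congr rfl fun d hd => ?_
    obtain ⟨p, rfl⟩ := degree_one_eq_single d
      (isHomog_degree K f 1 hf d (Finsupp.mem_support_iff.mp hd))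
    have h1 : rhoMap K G (monomial (Finsupp.single p 1) (coeff (Finsupp.single p 1) f))
        = monomial (Finsupp.single (mQ G p) 1) (coeff (Finsupp.single p 1) f) := by
      have := algHom_monomial K (rhoMap K G) (fun p => Finsupp.single (mQ G p) 1)
        (fun p => by rw [rhoMap_X]; rfl) (Finsupp.single p 1) (coeff (Finsupp.single p 1) f)
      rw [this, Finsupp.sum_single_index (by simp)]
      rw [one_smul]
    rw [h1]
    have h2 : L (Finsupp.single p 1) = mQ G p := by
      show (Finsupp.single p 1).sum (fun p k => k • mQ G p) = mQ G p
      rw [Finsupp.sum_single_index (by simp), one_smul]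
    rw [h2]
    rw [show (X (mQ G p) : MvPolynomial ((Bool × Sym2 V) →₀ ℕ) K)
      = monomial (Finsupp.single (mQ G p) 1) 1 from rfl, smul_monomial, smul_eq_mul, mul_one]
  rw [hrho, hgroup]

lemma cIdx_snd (A : Set V) (e : Sym2 V) : (cIdx A e).2 = e := by
  unfold cIdx; by_cases h : IsCutEdge A e
  · rw [if_pos h]
  · rw [if_neg h]

lemma cutW_apply (G : SimpleGraph V) (A : Set V) (x : Bool × Sym2 V) :
    cutW G A x = if x.2 ∈ (Set.toFinite G.edgeSet).toFinset ∧ cIdx A x.2 = x then 1 else 0 := by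
  classical
  rw [cutW, Finset.sum_apply']
  have hterm : ∀ e, (Finsupp.single (cIdx A e) 1 : (Bool × Sym2 V) →₀ ℕ) x
      = if e = x.2 then (if cIdx A x.2 = x then 1 else 0) else 0 := by
    intro e
    rw [Finsupp.single_apply]
    by_cases he : e = x.2
    · subst he; rw [if_pos rfl]
    · rw [if_neg he, if_neg (fun hc => he (by rw [← cIdx_snd A e, hc]))]
  rw [Finset.sum_congr rfl (fun e _ => hterm e)]
  rw [Finset.sum_ite_eq' _ x.2 (fun _ => if cIdx A x.2 = x then 1 else 0)]
  by_cases hm : x.2 ∈ (Set.toFinite G.edgeSet).toFinset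
  · rw [if_pos hm]
    by_cases hc : cIdx A x.2 = x
    · rw [if_pos hc, if_pos ⟨hm, hc⟩]
    · rw [if_neg hc, if_neg (fun h => hc h.2)]
  · rw [if_neg hm, if_neg (fun h => hm h.1)]

lemma not_isCutEdge_empty (e : Sym2 V) : ¬ IsCutEdge (∅ : Set V) e := by
  rintro ⟨u, v, rfl, hu, hv⟩; exact hu

lemma cutW_empty_apply_true (G : SimpleGraph V) (e : Sym2 V) :
    cutW G (∅ : Set V) (true, e) = 0 := by
  rw [cutW_apply]
  rw [if_neg]
  rintro ⟨hm, hc⟩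
  rw [cIdx, if_neg (not_isCutEdge_empty e)] at hc
  exact Bool.noConfusion (congrArg Prod.fst hc)

lemma cutW_apply_cut (G : SimpleGraph V) (A : Set V) (e : Sym2 V)
    (he : e ∈ G.edgeSet) (hc : IsCutEdge A e) : cutW G A (true, e) = 1 := by
  rw [cutW_apply]
  rw [if_pos]
  exact ⟨(Set.Finite.mem_toFinset _).mpr he, by rw [cIdx, if_pos hc]⟩

lemma cutW_ne_empty (G : SimpleGraph V) (A : Set V) (e : Sym2 V)
    (he : e ∈ G.edgeSet) (hc : IsCutEdge A e) : cutW G A ≠ cutW G (∅ : Set V) := by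
  intro h
  have h1 : cutW G A (true, e) = cutW G (∅ : Set V) (true, e) := by rw [h]
  rw [cutW_apply_cut G A e he hc, cutW_empty_apply_true G e] at h1
  exact one_ne_zero h1

/-- Main non-generation lemma -/
lemma notlin (G : SimpleGraph V) (k : ℕ) (A B : Fin (k+1) → Set V)
    (h1 : ∑ i, cutW G (A i) = ∑ i, cutW G (B i))
    (h2 : ∀ i, cutW G (B i) ≠ cutW G (A 0)) :
    ¬ ∃ S : Set (MvPolynomial (Partition V) K),
      (∀ f ∈ S, f.IsHomogeneous 1) ∧ Ideal.span S = cutIdeal K G := by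
  classical
  rintro ⟨S, hhom, hspan⟩
  set Pmk : Set V → Partition V := fun C => Quotient.mk (partitionSetoid V) C with hPmk
  have hmQ : ∀ C : Set V, mQ G (Pmk C) = cutW G C := fun C => rfl
  set F : MvPolynomial (Partition V) K :=
    (∏ i, X (Pmk (A i))) - ∏ i, X (Pmk (B i)) with hF
  have hprodphi : ∀ (Cs : Fin (k+1) → Set V),
      (∏ i, phi K G (X (Pmk (Cs i)))) = monomial (∑ i, cutW G (Cs i)) 1 := by
    intro Cs
    rw [Finset.prod_congr rfl (fun i _ => by rw [phi_X, hmQ] :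
      ∀ i ∈ Finset.univ, phi K G (X (Pmk (Cs i))) = monomial (cutW G (Cs i)) (1:K))]
    exact monprod K _ _
  have hFker : phi K G F = 0 := by
    rw [hF, map_sub, map_prod, map_prod, hprodphi A, hprodphi B, h1, sub_self]
  have hFI : F ∈ cutIdeal K G := by
    rw [cutIdeal]; exact RingHom.mem_ker.mpr hFker
  rw [← hspan] at hFI
  have hspanle : Ideal.span S ≤ RingHom.ker (rhoMap K G) := by
    rw [Ideal.span_le]
    intro f hf
    refine RingHom.mem_ker.mpr (linkill K G f (hhom f hf) ?_)
    have : f ∈ cutIdeal K G := hspan ▸ Ideal.subset_span hf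
    rw [cutIdeal] at this
    exact RingHom.mem_ker.mp this
  have hForho : rhoMap K G F = 0 := RingHom.mem_ker.mp (hspanle hFI)
  have hprodrho : ∀ (Cs : Fin (k+1) → Set V),
      (∏ i, rhoMap K G (X (Pmk (Cs i))))
        = monomial (∑ i, Finsupp.single (cutW G (Cs i)) 1) 1 := by
    intro Cs
    rw [Finset.prod_congr rfl (fun i _ => by rw [rhoMap_X, hmQ]; rfl :
      ∀ i ∈ Finset.univ, rhoMap K G (X (Pmk (Cs i)))
        = monomial (Finsupp.single (cutW G (Cs i)) 1) (1:K))]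
    exact monprod K _ _
  have hrhoF : rhoMap K G F
      = monomial (∑ i, Finsupp.single (cutW G (A i)) 1) 1
        - monomial (∑ i, Finsupp.single (cutW G (B i)) 1) 1 := by
    rw [hF, map_sub, map_prod, map_prod, hprodrho A, hprodrho B]
  set u : ((Bool × Sym2 V) →₀ ℕ) →₀ ℕ := ∑ i, Finsupp.single (cutW G (A i)) 1 with hu
  set v : ((Bool × Sym2 V) →₀ ℕ) →₀ ℕ := ∑ i, Finsupp.single (cutW G (B i)) 1 with hv
  have huv : u ≠ v := by
    intro hc
    have hueval : 1 ≤ u (cutW G (A 0)) := by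
      rw [hu, Finset.sum_apply']
      have h0 : (Finsupp.single (cutW G (A 0)) 1 : ((Bool × Sym2 V) →₀ ℕ) →₀ ℕ) (cutW G (A 0)) = 1 := by
        rw [Finsupp.single_apply, if_pos rfl]
      calc 1 = (Finsupp.single (cutW G (A 0)) 1 : ((Bool × Sym2 V) →₀ ℕ) →₀ ℕ) (cutW G (A 0)) := h0.symm
        _ ≤ _ := Finset.single_le_sum (f := fun i => (Finsupp.single (cutW G (A i)) 1 : ((Bool × Sym2 V) →₀ ℕ) →₀ ℕ) (cutW G (A 0))) (fun _ _ => Nat.zero_le _) (Finset.mem_univ 0)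
    have hveval : v (cutW G (A 0)) = 0 := by
      rw [hv, Finset.sum_apply']
      refine Finset.sum_eq_zero fun i _ => ?_
      rw [Finsupp.single_apply, if_neg (h2 i)]
    rw [hc, hveval] at hueval
    omega
  have : coeff u (rhoMap K G F) = 1 := by
    simp only [hrhoF, MvPolynomial.coeff_sub, coeff_monomial]
    rw [if_pos trivial, if_neg (fun h => huv h.symm), sub_zero]
  rw [hForho, coeff_zero] at this
  exact zero_ne_one this

lemma isCutEdge_iff (A : Set V) (u v : V) :
    IsCutEdge A s(u, v) ↔ (u ∈ A ∧ v ∉ A) ∨ (v ∈ A ∧ u ∉ A) := by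
  constructor
  · rintro ⟨x, y, hxy, hx, hy⟩
    rcases Sym2.eq_iff.mp hxy with ⟨rfl, rfl⟩ | ⟨rfl, rfl⟩
    · exact Or.inl ⟨hx, hy⟩
    · exact Or.inr ⟨hx, hy⟩
  · rintro (⟨hu, hv⟩ | ⟨hv, hu⟩)
    · exact ⟨u, v, rfl, hu, hv⟩
    · exact ⟨v, u, Sym2.eq_swap, hv, hu⟩

lemma single_sum_of_count {n : ℕ} (e : Sym2 V) (CA CB : Fin n → Set V)
    (hcount : (∑ i, if IsCutEdge (CA i) e then (1:ℕ) else 0)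
      = ∑ i, if IsCutEdge (CB i) e then 1 else 0) :
    ∑ i, Finsupp.single (cIdx (CA i) e) (1:ℕ) = ∑ i, Finsupp.single (cIdx (CB i) e) 1 := by
  classical
  have hs : ∀ (D : Set V), Finsupp.single (cIdx D e) (1:ℕ)
      = (if IsCutEdge D e then 1 else 0) • Finsupp.single ((true, e) : Bool × Sym2 V) (1:ℕ)
        + (if IsCutEdge D e then 0 else 1) • Finsupp.single ((false, e) : Bool × Sym2 V) 1 := by
    intro D
    unfold cIdx
    by_cases h : IsCutEdge D e <;> simp [h]
  have hco : (∑ i, if IsCutEdge (CA i) e then (0:ℕ) else 1)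
      = ∑ i, if IsCutEdge (CB i) e then 0 else 1 := by
    have hA : (∑ i, if IsCutEdge (CA i) e then (1:ℕ) else 0)
        + (∑ i, if IsCutEdge (CA i) e then (0:ℕ) else 1) = n := by
      rw [← Finset.sum_add_distrib]
      have : ∀ i : Fin n, ((if IsCutEdge (CA i) e then (1:ℕ) else 0)
          + if IsCutEdge (CA i) e then (0:ℕ) else 1) = 1 := by
        intro i; by_cases h : IsCutEdge (CA i) e <;> simp [h]
      rw [Finset.sum_congr rfl (fun i _ => this i)]
      simp
    have hB : (∑ i, if IsCutEdge (CB i) e then (1:ℕ) else 0)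
        + (∑ i, if IsCutEdge (CB i) e then (0:ℕ) else 1) = n := by
      rw [← Finset.sum_add_distrib]
      have : ∀ i : Fin n, ((if IsCutEdge (CB i) e then (1:ℕ) else 0)
          + if IsCutEdge (CB i) e then (0:ℕ) else 1) = 1 := by
        intro i; by_cases h : IsCutEdge (CB i) e <;> simp [h]
      rw [Finset.sum_congr rfl (fun i _ => this i)]
      simp
    omega
  rw [Finset.sum_congr rfl (fun i _ => hs (CA i)), Finset.sum_congr rfl (fun i _ => hs (CB i)),
    Finset.sum_add_distrib, Finset.sum_add_distrib,
    ← Finset.sum_smul, ← Finset.sum_smul, ← Finset.sum_smul, ← Finset.sum_smul,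
    hcount, hco]

lemma cutW_sum_eq (G : SimpleGraph V) {n : ℕ} (CA CB : Fin n → Set V)
    (hcount : ∀ e ∈ G.edgeSet, (∑ i, if IsCutEdge (CA i) e then (1:ℕ) else 0)
      = ∑ i, if IsCutEdge (CB i) e then 1 else 0) :
    ∑ i, cutW G (CA i) = ∑ i, cutW G (CB i) := by
  unfold cutW
  calc ∑ i, ∑ e ∈ (Set.toFinite G.edgeSet).toFinset, Finsupp.single (cIdx (CA i) e) 1
      = ∑ e ∈ (Set.toFinite G.edgeSet).toFinset, ∑ i, Finsupp.single (cIdx (CA i) e) 1 :=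
        Finset.sum_comm
    _ = ∑ e ∈ (Set.toFinite G.edgeSet).toFinset, ∑ i, Finsupp.single (cIdx (CB i) e) 1 :=
        Finset.sum_congr rfl fun e he =>
          single_sum_of_count e CA CB (hcount e ((Set.Finite.mem_toFinset _).mp he))
    _ = ∑ i, ∑ e ∈ (Set.toFinite G.edgeSet).toFinset, Finsupp.single (cIdx (CB i) e) 1 :=
        Finset.sum_comm

lemma notlinP (G : SimpleGraph V) (a c : V) (hac : a ≠ c) (hnadj : ¬ G.Adj a c)
    (ya yc : V) (hya : G.Adj a ya) (hyc : G.Adj c yc) :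
    ¬ ∃ S : Set (MvPolynomial (Partition V) K),
      (∀ f ∈ S, f.IsHomogeneous 1) ∧ Ideal.span S = cutIdeal K G := by
  refine notlin K G 1 ![∅, {a, c}] ![{a}, {c}] ?_ ?_
  · refine cutW_sum_eq G _ _ ?_
    refine fun e => Sym2.inductionOn e ?_
    intro x y he
    rw [SimpleGraph.mem_edgeSet] at he
    have hxy : x ≠ y := he.ne
    have h1 : ¬(x = a ∧ y = c) := by rintro ⟨rfl, rfl⟩; exact hnadj he
    have h2 : ¬(x = c ∧ y = a) := by rintro ⟨rfl, rfl⟩; exact hnadj he.symm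
    rw [Fin.sum_univ_succ, Fin.sum_univ_succ, Fin.sum_univ_succ, Fin.sum_univ_succ,
      Fin.sum_univ_zero, Fin.sum_univ_zero]
    simp only [Matrix.cons_val_zero, Matrix.cons_val_one, Matrix.head_cons, Fin.succ_zero_eq_one,
      isCutEdge_iff, Set.mem_empty_iff_false, Set.mem_insert_iff,
      Set.mem_singleton_iff, false_and, and_false, or_self, if_false]
    by_cases hxa : x = a <;> by_cases hxc : x = c <;> by_cases hya' : y = a <;>
      by_cases hyc' : y = c <;> simp_all
  · intro i
    fin_cases i
    · simp only [Matrix.cons_val_zero]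
      exact cutW_ne_empty G {a} s(a, ya) ((SimpleGraph.mem_edgeSet G).mpr hya)
        ((isCutEdge_iff _ a ya).mpr (Or.inl ⟨rfl, fun h => hya.ne' h⟩))
    · simp only [Matrix.cons_val_one, Matrix.head_cons, Matrix.cons_val_zero]
      exact cutW_ne_empty G {c} s(c, yc) ((SimpleGraph.mem_edgeSet G).mpr hyc)
        ((isCutEdge_iff _ c yc).mpr (Or.inl ⟨rfl, fun h => hyc.ne' h⟩))

lemma notlinK (G : SimpleGraph V) (a b c d : V) (hab : a ≠ b) (hac : a ≠ c) (hbc : b ≠ c)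
    (hda : d ≠ a) (hdb : d ≠ b) (hdc : d ≠ c)
    (had : G.Adj a d) (hbd : G.Adj b d) (hcd : G.Adj c d) :
    ¬ ∃ S : Set (MvPolynomial (Partition V) K),
      (∀ f ∈ S, f.IsHomogeneous 1) ∧ Ideal.span S = cutIdeal K G := by
  refine notlin K G 3 ![∅, {a, b}, {a, c}, {b, c}] ![{a}, {b}, {c}, {a, b, c}] ?_ ?_
  · refine cutW_sum_eq G _ _ ?_
    refine fun e => Sym2.inductionOn e ?_
    intro x y he
    rw [SimpleGraph.mem_edgeSet] at he
    have hxy : x ≠ y := he.ne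
    rw [Fin.sum_univ_succ, Fin.sum_univ_succ, Fin.sum_univ_succ, Fin.sum_univ_succ,
      Fin.sum_univ_succ, Fin.sum_univ_succ, Fin.sum_univ_succ, Fin.sum_univ_succ,
      Fin.sum_univ_zero, Fin.sum_univ_zero]
    simp only [Matrix.cons_val_zero, Matrix.cons_val_one, Matrix.head_cons,
      Fin.succ_zero_eq_one, Matrix.cons_val_succ,
      isCutEdge_iff, Set.mem_empty_iff_false, Set.mem_insert_iff,
      Set.mem_singleton_iff, false_and, and_false, or_self, if_false]
    by_cases hxa : x = a <;> by_cases hxb : x = b <;> by_cases hxc : x = c <;>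
      by_cases hya : y = a <;> by_cases hyb : y = b <;> by_cases hyc : y = c <;>
      simp_all
  · intro i
    fin_cases i
    · simp only [Matrix.cons_val_zero]
      exact cutW_ne_empty G {a} s(a, d) ((SimpleGraph.mem_edgeSet G).mpr had)
        ((isCutEdge_iff _ a d).mpr (Or.inl ⟨rfl, fun h => hda (h ▸ rfl)⟩))
    · simp only [Matrix.cons_val_one, Matrix.head_cons, Matrix.cons_val_zero]
      exact cutW_ne_empty G {b} s(b, d) ((SimpleGraph.mem_edgeSet G).mpr hbd)
        ((isCutEdge_iff _ b d).mpr (Or.inl ⟨rfl, fun h => hdb (h ▸ rfl)⟩))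
    · simp only [Matrix.cons_val_succ, Matrix.cons_val_zero]
      exact cutW_ne_empty G {c} s(c, d) ((SimpleGraph.mem_edgeSet G).mpr hcd)
        ((isCutEdge_iff _ c d).mpr (Or.inl ⟨rfl, fun h => hdc (h ▸ rfl)⟩))
    · simp only [Matrix.cons_val_succ, Matrix.cons_val_zero]
      refine cutW_ne_empty G {a, b, c} s(a, d) ((SimpleGraph.mem_edgeSet G).mpr had) ?_
      refine (isCutEdge_iff _ a d).mpr (Or.inl ⟨Set.mem_insert a _, ?_⟩)
      simp only [Set.mem_insert_iff, Set.mem_singleton_iff]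
      push_neg
      exact ⟨hda, hdb, hdc⟩

lemma X_sub_X_ne {σ : Type} (p q : σ) (h : p ≠ q) :
    (X p - X q : MvPolynomial σ K) ≠ 0 := by
  intro hc
  have h1 := congrArg (coeff (Finsupp.single p 1)) hc
  rw [MvPolynomial.coeff_sub, coeff_zero] at h1
  rw [show (X p : MvPolynomial σ K) = monomial (Finsupp.single p 1) 1 from rfl,
    show (X q : MvPolynomial σ K) = monomial (Finsupp.single q 1) 1 from rfl,
    coeff_monomial, coeff_monomial, if_pos rfl,
    if_neg (fun hc2 => h (Finsupp.single_left_injective one_ne_zero hc2).symm)] at h1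
  simp at h1

lemma exists_linear [Nonempty V] (G : SimpleGraph V) (hdisc : ¬ G.Connected) :
    ∃ f : MvPolynomial (Partition V) K,
      f.IsHomogeneous 1 ∧ f ∈ cutIdeal K G ∧ f ≠ 0 := by
  have hpre : ¬ G.Preconnected := by
    intro hp; exact hdisc ⟨hp⟩
  rw [SimpleGraph.Preconnected] at hpre
  push_neg at hpre
  obtain ⟨u, v, huv⟩ := hpre
  set B : Set V := {x | G.Reachable u x} with hB
  have hBu : u ∈ B := SimpleGraph.Reachable.refl u
  have hBv : v ∉ B := huv
  have hnocut : ∀ e : Sym2 V, e ∈ G.edgeSet → ¬ IsCutEdge B e := by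
    rintro e he ⟨x, y, rfl, hx, hy⟩
    rw [SimpleGraph.mem_edgeSet] at he
    exact hy (SimpleGraph.Reachable.trans hx he.reachable)
  have hW : cutW G B = cutW G (∅ : Set V) := by
    refine Finset.sum_congr rfl fun e he => ?_
    unfold cIdx
    rw [if_neg (hnocut e ((Set.Finite.mem_toFinset _).mp he)), if_neg (not_isCutEdge_empty e)]
  refine ⟨X (Quotient.mk (partitionSetoid V) B) - X (Quotient.mk (partitionSetoid V) ∅),
    (isHomogeneous_X K _).sub (isHomogeneous_X K _), ?_, ?_⟩
  · rw [cutIdeal]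
    refine RingHom.mem_ker.mpr ?_
    rw [map_sub, phi_X, phi_X]
    have h1 : mQ G (Quotient.mk (partitionSetoid V) B) = cutW G B := rfl
    have h2 : mQ G (Quotient.mk (partitionSetoid V) (∅ : Set V)) = cutW G ∅ := rfl
    rw [h1, h2, hW, sub_self]
  · refine X_sub_X_ne K _ _ ?_
    intro hc
    have : (partitionSetoid V).r B ∅ := Quotient.eq.mp hc
    rcases this with h | h
    · rw [← h] at hBu; exact hBu
    · have : v ∈ Bᶜ := hBv
      rw [← h] at this
      exact this

lemma span_homog_low_coeff {σ : Type} (d : ℕ) (S : Set (MvPolynomial σ K))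
    (hS : ∀ f ∈ S, f.IsHomogeneous d) (f : MvPolynomial σ K) (hf : f ∈ Ideal.span S)
    (m : σ →₀ ℕ) (hm : (m.sum fun _ k => k) < d) : coeff m f = 0 := by
  classical
  revert m
  refine Submodule.span_induction ?_ ?_ ?_ ?_ hf
  · intro g hg m hm
    by_contra hc
    rw [isHomog_degree K g d (hS g hg) m hc] at hm
    omega
  · intro m _; exact coeff_zero m
  · intro g h _ _ hg hh m hm
    rw [MvPolynomial.coeff_add, hg m hm, hh m hm, add_zero]
  · intro r g _ hg m hm
    rw [smul_eq_mul, MvPolynomial.coeff_mul]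
    refine Finset.sum_eq_zero fun p hp => ?_
    have hsum : p.1 + p.2 = m := Finset.HasAntidiagonal.mem_antidiagonal.mp hp
    have hdeg : (p.2.sum fun _ k => k) ≤ (m.sum fun _ k => k) := by
      rw [← hsum, Finsupp.sum_add_index' (fun _ => rfl) (fun _ _ _ => rfl)]
      omega
    rw [hg p.2 (lt_of_le_of_lt hdeg hm), mul_zero]

lemma subvar_mem {σ : Type} (h : σ → σ) (f : MvPolynomial σ K) :
    f - rename h f ∈ Ideal.span {g | ∃ p, g = (X p - X (h p) : MvPolynomial σ K)} := by
  induction f using MvPolynomial.induction_on with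
  | C a => rw [rename_C, sub_self]; exact Ideal.zero_mem _
  | add f g hf hg =>
      rw [map_add]
      have heq : f + g - (rename h f + rename h g) = (f - rename h f) + (g - rename h g) := by
        ring
      rw [heq]
      exact Ideal.add_mem _ hf hg
  | mul_X f p hf =>
      rw [map_mul, rename_X]
      have heq : f * X p - rename h f * X (h p)
          = (f - rename h f) * X p + rename h f * (X p - X (h p)) := by ring
      rw [heq]
      exact Ideal.add_mem _ (Ideal.mul_mem_right _ _ hf)
        (Ideal.mul_mem_left _ _ (Ideal.subset_span ⟨p, rfl⟩))

lemma ker_eq_span {σ σ' τ : Type} (M : σ → MvPolynomial τ K) (N : σ' → MvPolynomial τ K)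
    (r : σ → σ') (s : σ' → σ) (hrs : ∀ j, r (s j) = j) (hMN : ∀ p, M p = N (r p))
    (hN : Function.Injective (aeval N : MvPolynomial σ' K →ₐ[K] MvPolynomial τ K)) :
    RingHom.ker (aeval M : MvPolynomial σ K →ₐ[K] MvPolynomial τ K)
      = Ideal.span {g | ∃ p, g = (X p - X (s (r p)) : MvPolynomial σ K)} := by
  apply le_antisymm
  · intro f hf
    have hker : aeval M f = 0 := RingHom.mem_ker.mp hf
    have h1 : aeval N (rename r f) = aeval M f := by
      rw [aeval_rename]
      have : N ∘ r = M := funext fun p => (hMN p).symm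
      rw [this]
    have h2 : rename r f = 0 := hN (by rw [h1, hker, map_zero])
    have h3 : rename (s ∘ r) f = 0 := by
      rw [show rename (s ∘ r) f = rename s (rename r f) from (rename_rename r s f).symm, h2,
        map_zero]
    have hsv := subvar_mem K (s ∘ r) f
    rw [h3, sub_zero] at hsv
    exact hsv
  · rw [Ideal.span_le]
    rintro g ⟨p, rfl⟩
    refine RingHom.mem_ker.mpr ?_
    rw [map_sub, aeval_X, aeval_X, hMN, hMN (s (r p)), hrs, sub_self]

lemma aeval_monomials_injective {σ' τ : Type} (w : σ' → (τ →₀ ℕ))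
    (hL : Function.Injective (fun d : σ' →₀ ℕ => d.sum fun j k => k • w j)) :
    Function.Injective (aeval (fun j => monomial (w j) (1:K)) :
      MvPolynomial σ' K →ₐ[K] MvPolynomial τ K) := by
  classical
  set L : (σ' →₀ ℕ) → (τ →₀ ℕ) := fun d => d.sum fun j k => k • w j with hLdef
  set ψ : MvPolynomial σ' K →ₐ[K] MvPolynomial τ K :=
    aeval (fun j => monomial (w j) (1:K)) with hψ
  have hker : ∀ f : MvPolynomial σ' K, ψ f = 0 → f = 0 := by
    intro f hf
    by_contra hne
    obtain ⟨d₀, hd₀⟩ := MvPolynomial.ne_zero_iff.mp hne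
    have hdecomp : f = ∑ d ∈ f.support, monomial d (coeff d f) :=
      (f.support_sum_monomial_coeff).symm
    have hψf : ψ f = ∑ d ∈ f.support, monomial (L d) (coeff d f) := by
      conv_lhs => rw [hdecomp]
      rw [map_sum]
      exact Finset.sum_congr rfl fun d _ =>
        algHom_monomial K ψ w (fun p => by rw [hψ, aeval_X]) d (coeff d f)
    have hco : coeff (L d₀) (ψ f) = coeff d₀ f := by
      rw [hψf, MvPolynomial.coeff_sum]
      rw [Finset.sum_eq_single_of_mem d₀ (MvPolynomial.mem_support_iff.mpr hd₀)]
      · rw [coeff_monomial, if_pos rfl]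
      · intro d _ hne'
        rw [coeff_monomial, if_neg (fun hc => hne' (hL hc))]
    rw [hf, coeff_zero] at hco
    exact hd₀ hco.symm
  intro f g h
  have := hker (f - g) (by rw [map_sub, h, sub_self])
  exact sub_eq_zero.mp this

lemma cutIdeal_eq_span {σ' : Type} (G : SimpleGraph V) (N : σ' → MvPolynomial (Bool × Sym2 V) K)
    (r : Partition V → σ') (s : σ' → Partition V) (hrs : ∀ j, r (s j) = j)
    (hMN : ∀ p : Partition V, phi K G (X p) = N (r p))
    (hN : Function.Injective (aeval N : MvPolynomial σ' K →ₐ[K] MvPolynomial (Bool × Sym2 V) K)) :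
    cutIdeal K G = Ideal.span {g | ∃ p, g = (X p - X (s (r p)) : MvPolynomial (Partition V) K)} := by
  rw [cutIdeal, phi]
  refine ker_eq_span K _ N r s hrs ?_ hN
  intro p
  have := hMN p
  rw [phi, aeval_X] at this
  exact this

lemma genlin_of_span (G : SimpleGraph V) {σ' : Type} (N : σ' → MvPolynomial (Bool × Sym2 V) K)
    (r : Partition V → σ') (s : σ' → Partition V) (hrs : ∀ j, r (s j) = j)
    (hMN : ∀ p : Partition V, phi K G (X p) = N (r p))
    (hN : Function.Injective (aeval N : MvPolynomial σ' K →ₐ[K] MvPolynomial (Bool × Sym2 V) K)) :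
    ∃ S : Set (MvPolynomial (Partition V) K),
      (∀ f ∈ S, f.IsHomogeneous 1) ∧ Ideal.span S = cutIdeal K G := by
  refine ⟨{g | ∃ p, g = (X p - X (s (r p)) : MvPolynomial (Partition V) K)}, ?_, ?_⟩
  · rintro f ⟨p, rfl⟩
    exact (isHomogeneous_X K _).sub (isHomogeneous_X K _)
  · exact (cutIdeal_eq_span K G N r s hrs hMN hN).symm

lemma genlin_single (G : SimpleGraph V) (a b : V) (hab : a ≠ b)
    (hE : G.edgeSet = {s(a, b)}) :
    ∃ S : Set (MvPolynomial (Partition V) K),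
      (∀ f ∈ S, f.IsHomogeneous 1) ∧ Ideal.span S = cutIdeal K G := by
  classical
  set e : Sym2 V := s(a, b) with he
  have hEF : (Set.toFinite G.edgeSet).toFinset = {e} := by
    ext x
    rw [Set.Finite.mem_toFinset, hE]
    simp
  set r : Partition V → Bool := Quotient.lift (fun A => if IsCutEdge A e then true else false)
    (fun A B hAB => by
      rcases (hAB : B = A ∨ B = Aᶜ) with rfl | rfl
      · rfl
      · show (if IsCutEdge A e then true else false) = if IsCutEdge Aᶜ e then true else false
        by_cases h : IsCutEdge A e
        · rw [if_pos h, if_pos ((isCutEdge_compl A e).mpr h)]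
        · rw [if_neg h, if_neg (fun hc => h ((isCutEdge_compl A e).mp hc))]) with hr
  set N : Bool → MvPolynomial (Bool × Sym2 V) K :=
    fun j => monomial (Finsupp.single ((j, e) : Bool × Sym2 V) 1) 1 with hNdef
  set s' : Fin 1 ⊕ Bool → Partition V := fun _ => Quotient.mk (partitionSetoid V) ∅ with hs'0
  refine genlin_of_span K G N r
    (fun j => if j then Quotient.mk (partitionSetoid V) {a} else Quotient.mk (partitionSetoid V) ∅)
    ?_ ?_ ?_
  · intro j
    cases j with
    | true =>
        show r (Quotient.mk (partitionSetoid V) {a}) = true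
        have hcut : IsCutEdge ({a} : Set V) e :=
          (isCutEdge_iff _ a b).mpr (Or.inl ⟨rfl, fun h => hab (h.symm)⟩)
        show (if IsCutEdge ({a} : Set V) e then true else false) = true
        rw [if_pos hcut]
    | false =>
        show (if IsCutEdge (∅ : Set V) e then true else false) = false
        rw [if_neg (not_isCutEdge_empty e)]
  · intro p
    induction p using Quotient.ind with
    | _ A =>
      rw [phi, aeval_X]
      show cutMonomial K G A = N (if IsCutEdge A e then true else false)
      rw [cutMonomial, hEF, Finset.prod_singleton]
      by_cases h : IsCutEdge A e
      · rw [if_pos h, if_pos h, hNdef]; rfl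
      · rw [if_neg h, if_neg h, hNdef]; rfl
  · refine aeval_monomials_injective K (fun j => Finsupp.single ((j, e) : Bool × Sym2 V) 1) ?_
    intro d d' h
    beta_reduce at h
    have key : ∀ (d : Bool →₀ ℕ) (j : Bool),
        (d.sum fun i k => k • Finsupp.single ((i, e) : Bool × Sym2 V) (1:ℕ)) (j, e) = d j := by
      intro d j
      rw [Finsupp.sum_apply]
      have hterm : ∀ i k, (k • Finsupp.single ((i, e) : Bool × Sym2 V) (1:ℕ)) (j, e)
          = if i = j then k else 0 := by
        intro i k
        rw [Finsupp.smul_apply, Finsupp.single_apply]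
        by_cases hij : i = j
        · subst hij; rw [if_pos rfl, if_pos rfl]; simp
        · rw [if_neg (fun hc : (i, e) = (j, e) => hij (congrArg Prod.fst hc)), if_neg hij]
          simp
      rw [show (d.sum fun i k => (k • Finsupp.single ((i, e) : Bool × Sym2 V) (1:ℕ)) (j, e))
          = d.sum fun i k => if i = j then k else 0 from
        Finset.sum_congr rfl (fun i _ => hterm i (d i))]
      rw [Finsupp.sum_ite_eq']
      by_cases hj : j ∈ d.support
      · rw [if_pos hj]
      · rw [if_neg hj, Finsupp.notMem_support_iff.mp hj]
    ext j
    have h1 : (d.sum fun i k => k • Finsupp.single ((i, e) : Bool × Sym2 V) (1:ℕ)) (j, e)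
        = (d'.sum fun i k => k • Finsupp.single ((i, e) : Bool × Sym2 V) (1:ℕ)) (j, e) :=
      DFunLike.congr_fun h ((j, e) : Bool × Sym2 V)
    rw [key d j, key d' j] at h1
    exact h1

lemma genlin_triangle (G : SimpleGraph V) (a b c : V) (hab : a ≠ b) (hac : a ≠ c) (hbc : b ≠ c)
    (hE : G.edgeSet = {s(a, b), s(a, c), s(b, c)}) :
    ∃ S : Set (MvPolynomial (Partition V) K),
      (∀ f ∈ S, f.IsHomogeneous 1) ∧ Ideal.span S = cutIdeal K G := by
  classical
  set e1 : Sym2 V := s(a, b) with he1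
  set e2 : Sym2 V := s(a, c) with he2
  set e3 : Sym2 V := s(b, c) with he3
  have he12 : e1 ≠ e2 := by
    rw [he1, he2]
    intro h
    rcases Sym2.eq_iff.mp h with ⟨_, h2⟩ | ⟨h1, _⟩
    · exact hbc h2
    · exact hac h1
  have he13 : e1 ≠ e3 := by
    rw [he1, he3]
    intro h
    rcases Sym2.eq_iff.mp h with ⟨h1, _⟩ | ⟨h1, _⟩
    · exact hab h1
    · exact hac h1
  have he23 : e2 ≠ e3 := by
    rw [he2, he3]
    intro h
    rcases Sym2.eq_iff.mp h with ⟨h1, _⟩ | ⟨h1, _⟩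
    · exact hab h1
    · exact hac h1
  have hEF : (Set.toFinite G.edgeSet).toFinset = ({e1, e2, e3} : Finset (Sym2 V)) := by
    ext x
    rw [Set.Finite.mem_toFinset, hE]
    simp
  set B1 : Fin 4 → Bool := ![false, true, true, false] with hB1
  set B2 : Fin 4 → Bool := ![false, true, false, true] with hB2
  set B3 : Fin 4 → Bool := ![false, false, true, true] with hB3
  set w : Fin 4 → ((Bool × Sym2 V) →₀ ℕ) := fun j =>
    Finsupp.single ((B1 j, e1) : Bool × Sym2 V) 1
      + (Finsupp.single ((B2 j, e2) : Bool × Sym2 V) 1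
        + Finsupp.single ((B3 j, e3) : Bool × Sym2 V) 1) with hw
  set rA : Set V → Fin 4 := fun A =>
    if ((a ∈ A) ↔ (b ∈ A)) then (if ((a ∈ A) ↔ (c ∈ A)) then 0 else 3)
    else (if ((a ∈ A) ↔ (c ∈ A)) then 2 else 1) with hrA
  have hrAcompl : ∀ A : Set V, rA A = rA Aᶜ := by
    intro A
    have h1 : ((a ∈ Aᶜ) ↔ (b ∈ Aᶜ)) ↔ ((a ∈ A) ↔ (b ∈ A)) := by
      simp [Set.mem_compl_iff, not_iff_not]
    have h2 : ((a ∈ Aᶜ) ↔ (c ∈ Aᶜ)) ↔ ((a ∈ A) ↔ (c ∈ A)) := by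
      simp [Set.mem_compl_iff, not_iff_not]
    rw [hrA]
    simp only [h1, h2]
  set r : Partition V → Fin 4 := Quotient.lift rA
    (fun A B hAB => by
      rcases (hAB : B = A ∨ B = Aᶜ) with rfl | rfl
      · rfl
      · exact (hrAcompl A)) with hr
  have hXmon : ∀ (β γ δ : Bool),
      (X ((β, e1) : Bool × Sym2 V) : MvPolynomial (Bool × Sym2 V) K)
        * (X ((γ, e2) : Bool × Sym2 V) * X ((δ, e3) : Bool × Sym2 V))
      = monomial (Finsupp.single ((β, e1) : Bool × Sym2 V) 1
          + (Finsupp.single ((γ, e2) : Bool × Sym2 V) 1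
            + Finsupp.single ((δ, e3) : Bool × Sym2 V) 1)) 1 := by
    intro β γ δ
    rw [show (X ((β, e1) : Bool × Sym2 V) : MvPolynomial (Bool × Sym2 V) K)
        = monomial (Finsupp.single ((β, e1) : Bool × Sym2 V) 1) 1 from rfl,
      show (X ((γ, e2) : Bool × Sym2 V) : MvPolynomial (Bool × Sym2 V) K)
        = monomial (Finsupp.single ((γ, e2) : Bool × Sym2 V) 1) 1 from rfl,
      show (X ((δ, e3) : Bool × Sym2 V) : MvPolynomial (Bool × Sym2 V) K)
        = monomial (Finsupp.single ((δ, e3) : Bool × Sym2 V) 1) 1 from rfl,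
      monomial_mul, monomial_mul, one_mul, one_mul]
  refine genlin_of_span K G (fun j => monomial (w j) 1) r
    ![Quotient.mk (partitionSetoid V) (∅ : Set V), Quotient.mk (partitionSetoid V) ({a} : Set V),
      Quotient.mk (partitionSetoid V) ({b} : Set V), Quotient.mk (partitionSetoid V) ({c} : Set V)]
    ?_ ?_ ?_
  · intro j
    fin_cases j
    · show rA ∅ = 0
      rw [hrA]
      simp
    · show rA {a} = 1
      rw [hrA]
      simp [Ne.symm hab, Ne.symm hac, hab, hac]
    · show rA {b} = 2
      rw [hrA]
      simp [hab, Ne.symm hab, hbc, Ne.symm hbc]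
    · show rA {c} = 3
      rw [hrA]
      simp [hac, Ne.symm hac, hbc, Ne.symm hbc]
  · intro p
    induction p using Quotient.ind with
    | _ A =>
      rw [phi, aeval_X]
      show cutMonomial K G A = monomial (w (rA A)) 1
      have hnot1 : e1 ∉ ({e2, e3} : Finset (Sym2 V)) := by
        simp [he12, he13]
      have hnot2 : e2 ∉ ({e3} : Finset (Sym2 V)) := by
        simp [he23]
      rw [cutMonomial, hEF, Finset.prod_insert hnot1, Finset.prod_insert hnot2,
        Finset.prod_singleton]
      have hsh : ∀ (A : Set V) (e : Sym2 V),
          (if IsCutEdge A e then (X ((true, e) : Bool × Sym2 V) : MvPolynomial (Bool × Sym2 V) K)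
            else X ((false, e) : Bool × Sym2 V))
          = X ((if IsCutEdge A e then true else false, e) : Bool × Sym2 V) := by
        intro A e
        by_cases h : IsCutEdge A e
        · rw [if_pos h, if_pos h]
        · rw [if_neg h, if_neg h]
      rw [hsh A e1, hsh A e2, hsh A e3, hXmon]
      congr 1
      rw [hrA, hw]
      have hc1 : IsCutEdge A e1 ↔ ((a ∈ A ∧ b ∉ A) ∨ (b ∈ A ∧ a ∉ A)) := isCutEdge_iff A a b
      have hc2 : IsCutEdge A e2 ↔ ((a ∈ A ∧ c ∉ A) ∨ (c ∈ A ∧ a ∉ A)) := isCutEdge_iff A a c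
      have hc3 : IsCutEdge A e3 ↔ ((b ∈ A ∧ c ∉ A) ∨ (c ∈ A ∧ b ∉ A)) := isCutEdge_iff A b c
      simp only [hc1, hc2, hc3]
      by_cases ha' : a ∈ A <;> by_cases hb' : b ∈ A <;> by_cases hc' : c ∈ A <;>
        simp [ha', hb', hc', hB1, hB2, hB3]
  · refine aeval_monomials_injective K w ?_
    intro d d' h
    beta_reduce at h
    have key : ∀ (d : Fin 4 →₀ ℕ) (x : Bool × Sym2 V),
        (d.sum fun j k => k • w j) x = ∑ j : Fin 4, d j * (w j) x := by
      intro d x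
      rw [Finsupp.sum_fintype _ _ (fun j => by rw [zero_smul])]
      rw [Finset.sum_apply']
      refine Finset.sum_congr rfl fun j _ => ?_
      rw [Finsupp.smul_apply, smul_eq_mul]
    have happ : ∀ x : Bool × Sym2 V, (∑ j : Fin 4, d j * (w j) x) = ∑ j : Fin 4, d' j * (w j) x := by
      intro x
      rw [← key d x, ← key d' x, h]
    have hwval : ∀ (β : Bool) (e : Sym2 V) (j : Fin 4),
        (w j) (β, e) = (if (B1 j, e1) = ((β, e) : Bool × Sym2 V) then 1 else 0)
          + ((if (B2 j, e2) = ((β, e) : Bool × Sym2 V) then 1 else 0)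
            + (if (B3 j, e3) = ((β, e) : Bool × Sym2 V) then 1 else 0)) := by
      intro β e j
      rw [hw]
      simp [Finsupp.single_apply]
    have h1 := happ (true, e1)
    have h2 := happ (true, e2)
    have h3 := happ (true, e3)
    have h4 := happ (false, e1)
    rw [Fin.sum_univ_four, Fin.sum_univ_four] at h1 h2 h3 h4
    simp only [hwval, hB1, hB2, hB3] at h1 h2 h3 h4
    simp only [Matrix.cons_val_zero, Matrix.cons_val_one, Matrix.head_cons, Matrix.cons_val_succ,
      Prod.mk.injEq, he12, he13, he23, Ne.symm he12, Ne.symm he13, Ne.symm he23]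
      at h1 h2 h3 h4
    simp at h1 h2 h3 h4
    have g0 : d 0 = d' 0 := by omega
    have g1 : d 1 = d' 1 := by omega
    have g2 : d 2 = d' 2 := by omega
    have g3 : d 3 = d' 3 := by omega
    ext j
    fin_cases j
    · exact g0
    · exact g1
    · exact g2
    · exact g3


theorem stmt10 {V : Type} [Fintype V] [Nonempty V] (K : Type) [Field K]
    (G : SimpleGraph V) (hE : G.edgeSet.Nonempty) (hdisc : ¬ G.Connected) :
    ((∃ d : ℕ, 1 ≤ d ∧ ∃ S : Set (MvPolynomial (Partition V) K),
        (∀ f ∈ S, f.IsHomogeneous d) ∧ Ideal.span S = cutIdeal K G) ↔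
      (∃ S : Set (MvPolynomial (Partition V) K),
        (∀ f ∈ S, f.IsHomogeneous 1) ∧ Ideal.span S = cutIdeal K G)) ∧
    ((∃ S : Set (MvPolynomial (Partition V) K),
        (∀ f ∈ S, f.IsHomogeneous 1) ∧ Ideal.span S = cutIdeal K G) ↔
      (((∃ e : Sym2 V, G.edgeSet = {e}) ∧ 3 ≤ Fintype.card V) ∨
       ((∃ a b c : V, a ≠ b ∧ a ≠ c ∧ b ≠ c ∧
          G.edgeSet = {s(a, b), s(a, c), s(b, c)}) ∧ 4 ≤ Fintype.card V))) := by
  classical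
  constructor
  · -- part 1
    constructor
    · rintro ⟨d, hd1, S, hhom, hspan⟩
      rcases Nat.lt_or_ge d 2 with hlt | hge
      · have hd : d = 1 := by omega
        subst hd
        exact ⟨S, hhom, hspan⟩
      · exfalso
        obtain ⟨f₀, hf₀hom, hf₀I, hf₀ne⟩ := exists_linear K G hdisc
        rw [← hspan] at hf₀I
        obtain ⟨m, hm⟩ := MvPolynomial.ne_zero_iff.mp hf₀ne
        have hdeg : (m.sum fun _ k => k) = 1 := isHomog_degree K f₀ 1 hf₀hom m hm
        exact hm (span_homog_low_coeff K d S hhom f₀ hf₀I m (by omega))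
    · rintro ⟨S, hhom, hspan⟩
      exact ⟨1, le_refl 1, S, hhom, hspan⟩
  · -- part 2
    constructor
    · intro hLin
      -- get an edge
      obtain ⟨x, y, hxy⟩ : ∃ x y, G.Adj x y := by
        obtain ⟨e, he⟩ := hE
        induction e using Sym2.inductionOn with
        | _ x y => exact ⟨x, y, (SimpleGraph.mem_edgeSet G).mp he⟩
      by_cases hP : ∃ a c, a ≠ c ∧ (∃ t, G.Adj a t) ∧ (∃ t, G.Adj c t) ∧ ¬ G.Adj a c
      · obtain ⟨a, c, hne, ⟨ya, hya⟩, ⟨yc, hyc⟩, hnadj⟩ := hP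
        exact absurd hLin (notlinP K G a c hne hnadj ya yc hya hyc)
      push_neg at hP
      by_cases h3 : ∃ z, z ≠ x ∧ z ≠ y ∧ (∃ t, G.Adj z t)
      · obtain ⟨z, hzx, hzy, hz⟩ := h3
        have hxz : G.Adj x z := hP x z (Ne.symm hzx) ⟨y, hxy⟩ hz
        have hyz : G.Adj y z := hP y z (Ne.symm hzy) ⟨x, hxy.symm⟩ hz
        by_cases h4 : ∃ u, u ≠ x ∧ u ≠ y ∧ u ≠ z ∧ (∃ t, G.Adj u t)
        · obtain ⟨u, hux, huy, huz, hu⟩ := h4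
          have hxu : G.Adj x u := hP x u (Ne.symm hux) ⟨y, hxy⟩ hu
          have hyu : G.Adj y u := hP y u (Ne.symm huy) ⟨x, hxy.symm⟩ hu
          have hzu : G.Adj z u := hP z u (Ne.symm huz) hz hu
          exact absurd hLin
            (notlinK K G x y z u hxy.ne hxz.ne hyz.ne hux huy huz hxu hyu hzu)
        · push_neg at h4
          right
          constructor
          · refine ⟨x, y, z, hxy.ne, hxz.ne, hyz.ne, ?_⟩
            ext e'
            constructor
            · intro he'
              revert he'
              induction e' using Sym2.inductionOn with
              | _ u v =>
                intro he'
                rw [SimpleGraph.mem_edgeSet] at he'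
                have hu : u = x ∨ u = y ∨ u = z := by
                  by_contra hc
                  push_neg at hc
                  exact h4 u hc.1 hc.2.1 hc.2.2 v he'
                have hv : v = x ∨ v = y ∨ v = z := by
                  by_contra hc
                  push_neg at hc
                  exact h4 v hc.1 hc.2.1 hc.2.2 u he'.symm
                have huv : u ≠ v := he'.ne
                simp only [Set.mem_insert_iff, Set.mem_singleton_iff]
                rcases hu with rfl | rfl | rfl <;> rcases hv with rfl | rfl | rfl <;>
                  first
                    | exact absurd rfl huv
                    | exact Or.inl rfl
                    | exact Or.inr (Or.inl rfl)
                    | exact Or.inr (Or.inr rfl)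
                    | exact Or.inl Sym2.eq_swap
                    | exact Or.inr (Or.inl Sym2.eq_swap)
                    | exact Or.inr (Or.inr Sym2.eq_swap)
            · intro he'
              simp only [Set.mem_insert_iff, Set.mem_singleton_iff] at he'
              rcases he' with rfl | rfl | rfl
              · exact (SimpleGraph.mem_edgeSet G).mpr hxy
              · exact (SimpleGraph.mem_edgeSet G).mpr hxz
              · exact (SimpleGraph.mem_edgeSet G).mpr hyz
          · -- card ≥ 4
            obtain ⟨u, hu⟩ : ∃ u : V, u ≠ x ∧ u ≠ y ∧ u ≠ z := by
              by_contra hc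
              push_neg at hc
              refine hdisc ⟨fun s t => ?_⟩
              have hreach : ∀ s : V, s ≠ x → G.Reachable x s := by
                intro s hs
                by_cases hsy : s = y
                · subst hsy; exact hxy.reachable
                · have := hc s hs hsy
                  subst this
                  exact hxz.reachable
              by_cases hsx : s = x
              · by_cases htx : t = x
                · rw [hsx, htx]
                · rw [hsx]; exact hreach t htx
              · by_cases htx : t = x
                · rw [htx]; exact (hreach s hsx).symm
                · exact (hreach s hsx).symm.trans (hreach t htx)
            obtain ⟨hux, huy, huz⟩ := hu
            have hcard : ({x, y, z, u} : Finset V).card = 4 := by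
              rw [Finset.card_insert_of_notMem (by
                  simp only [Finset.mem_insert, Finset.mem_singleton]
                  push_neg
                  exact ⟨hxy.ne, hxz.ne, Ne.symm hux⟩),
                Finset.card_insert_of_notMem (by
                  simp only [Finset.mem_insert, Finset.mem_singleton]
                  push_neg
                  exact ⟨hyz.ne, Ne.symm huy⟩),
                Finset.card_insert_of_notMem (by
                  simp only [Finset.mem_singleton]
                  exact Ne.symm huz),
                Finset.card_singleton]
            calc 4 = ({x, y, z, u} : Finset V).card := hcard.symm
              _ ≤ Fintype.card V := Finset.card_le_univ _
      · push_neg at h3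
        left
        constructor
        · refine ⟨s(x, y), ?_⟩
          ext e'
          constructor
          · intro he'
            revert he'
            induction e' using Sym2.inductionOn with
            | _ u v =>
              intro he'
              rw [SimpleGraph.mem_edgeSet] at he'
              have hu : u = x ∨ u = y := by
                by_contra hc
                push_neg at hc
                exact h3 u hc.1 hc.2 v he'
              have hv : v = x ∨ v = y := by
                by_contra hc
                push_neg at hc
                exact h3 v hc.1 hc.2 u he'.symm
              have huv : u ≠ v := he'.ne
              show s(u, v) ∈ ({s(x, y)} : Set (Sym2 V))
              rcases hu with rfl | rfl <;> rcases hv with rfl | rfl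
              · exact absurd rfl huv
              · rfl
              · exact Set.mem_singleton_iff.mpr Sym2.eq_swap
              · exact absurd rfl huv
          · intro he'
            rw [Set.mem_singleton_iff] at he'
            subst he'
            exact (SimpleGraph.mem_edgeSet G).mpr hxy
        · obtain ⟨z, hz⟩ : ∃ z : V, z ≠ x ∧ z ≠ y := by
            by_contra hc
            push_neg at hc
            refine hdisc ⟨fun s t => ?_⟩
            have hreach : ∀ s : V, s ≠ x → G.Reachable x s := by
              intro s hs
              have := hc s hs
              subst this
              exact hxy.reachable
            by_cases hsx : s = x
            · by_cases htx : t = x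
              · rw [hsx, htx]
              · rw [hsx]; exact hreach t htx
            · by_cases htx : t = x
              · rw [htx]; exact (hreach s hsx).symm
              · exact (hreach s hsx).symm.trans (hreach t htx)
          obtain ⟨hzx, hzy⟩ := hz
          have hcard : ({x, y, z} : Finset V).card = 3 := by
            rw [Finset.card_insert_of_notMem (by
                simp only [Finset.mem_insert, Finset.mem_singleton]
                push_neg
                exact ⟨hxy.ne, Ne.symm hzx⟩),
              Finset.card_insert_of_notMem (by
                simp only [Finset.mem_singleton]
                exact Ne.symm hzy),
              Finset.card_singleton]
          calc 3 = ({x, y, z} : Finset V).card := hcard.symm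
            _ ≤ Fintype.card V := Finset.card_le_univ _
    · rintro (⟨⟨e, hEe⟩, _⟩ | ⟨⟨a, b, c, hab, hac, hbc, hEt⟩, _⟩)
      · revert hEe
        induction e using Sym2.inductionOn with
        | _ a b =>
          intro hEe
          have hmem : s(a, b) ∈ G.edgeSet := by rw [hEe]; exact Set.mem_singleton _
          have hab : a ≠ b := ((SimpleGraph.mem_edgeSet G).mp hmem).ne
          exact genlin_single K G a b hab hEe
      · exact genlin_triangle K G a b c hab hac hbc hEt

end CutPaper
end
end
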